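/- Define θ_m(d) = (1/π)·arccos((ℓ(d)² − 1)/(2·ℓ(d)²)) for d > 0. Then: (i) (1/(2π))·arccos((1 − 2ℓ² − ℓ⁴)/(2ℓ⁴)) = (1/π)·arccos((ℓ² − 1)/(2ℓ²)) for ℓ = ℓ(d); (ii) the function d ↦ θ_m(d) is continuous and strictly decreasing on (0,∞), with limit 1/2 as d → 0⁺ and limit 1/3 as d → +∞; (iii) θ_m(d) = 3/7 if and only if d = d₀, θ_m(d) < 3/7 if and only if d > d₀, and θ_m(d) > 3/7 if and only if d < d₀; (iv) ℓ(d₀) = 1/√(1 − 2·sin(π/14)). -/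

import Mathlib

/-!
Write `ℓ = ℓ(d)`. Since `ℓ > 1` and `ℓ(ℓ² - 1) = d`, the map `d ↦ ℓ(d)` is the inverse of the
increasing bijection `t ↦ t³ - t` from `(1, ∞)` onto `(0, ∞)`; hence it is continuous and
increasing, tends to `1` at `0⁺` and to `∞` at `∞`. On the other hand `θ_m = Θ(ℓ)` with
`Θ(t) = (1/π) arccos (1/2 - 1/(2t²))` strictly decreasing on `[1, ∞)`, `Θ(1) = 1/2`, `Θ(∞) = 1/3`.
The value `3/7` is attained at `ℓ₀ = 1/√(1 - 2 sin(π/14))`, because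
`(ℓ₀² - 1)/(2ℓ₀²) = sin(π/14) = cos(3π/7)`, and `ℓ₀³ - ℓ₀ = d₀`. Identity (i) is the double angle
formula `arccos (2x² - 1) = 2 arccos x` for `x ∈ [0, 1]`.
-/

open Real

noncomputable def d₀ : ℝ := 2 * Real.sin (π / 14) / (1 - 2 * Real.sin (π / 14)) ^ ((3 : ℝ) / 2)

open Set Filter Topology

lemma strictMonoOn_cube_sub_self : StrictMonoOn (fun t : ℝ => t ^ 3 - t) (Ici 1) := by
  intro a ha b hb hab
  simp only [mem_Ici] at ha hb
  nlinarith [mul_pos (sub_pos.2 hab) (by nlinarith : (0 : ℝ) < b ^ 2 + a * b + a ^ 2 - 1)]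

lemma cube_sub_self_pos {t : ℝ} (ht : 1 < t) : 0 < t ^ 3 - t := by
  nlinarith [mul_pos (mul_pos (by linarith : 0 < t) (sub_pos.2 ht)) (by linarith : 0 < t + 1)]

lemma arccos_two_mul_sq_sub_one {x : ℝ} (hx₀ : 0 ≤ x) (hx₁ : x ≤ 1) :
    arccos (2 * x ^ 2 - 1) = 2 * arccos x := by
  have hcos : cos (arccos x) = x := cos_arccos (by linarith) hx₁
  rw [← hcos, ← cos_two_mul, hcos,
    arccos_cos (by linarith [arccos_nonneg x]) (by linarith [arccos_le_pi_div_two.2 hx₀])]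

lemma arccos_sin_pi_div_fourteen : arccos (sin (π / 14)) = 3 * π / 7 := by
  rw [← cos_pi_div_two_sub, show π / 2 - π / 14 = 3 * π / 7 by ring,
    arccos_cos (by positivity) (by linarith [pi_pos])]

lemma sin_pi_div_fourteen_lt_half : sin (π / 14) < 1 / 2 := by
  rw [← sin_pi_div_six]
  exact sin_lt_sin_of_lt_of_le_pi_div_two (by linarith [pi_pos]) (by linarith [pi_pos])
    (by linarith [pi_pos])

/-- `θ_m(d) = thetaM (ℓ d)`. -/
noncomputable def thetaM (t : ℝ) : ℝ := (1 / π) * arccos ((t ^ 2 - 1) / (2 * t ^ 2))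

lemma thetaM_one : thetaM 1 = 1 / 2 := by
  rw [thetaM, show ((1 : ℝ) ^ 2 - 1) / (2 * 1 ^ 2) = 0 by norm_num, arccos_zero]
  field_simp

lemma continuousAt_thetaM {t : ℝ} (ht : t ≠ 0) : ContinuousAt thetaM t :=
  continuousAt_const.mul <|
    continuous_arccos.continuousAt.comp <| by fun_prop (disch := positivity)

lemma strictAntiOn_thetaM : StrictAntiOn thetaM (Ici 1) := by
  intro a ha b hb hab
  simp only [mem_Ici] at ha hb
  have hmem : ∀ t : ℝ, 1 ≤ t → (t ^ 2 - 1) / (2 * t ^ 2) ∈ Icc (-1 : ℝ) 1 := fun t ht =>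
    ⟨by rw [le_div_iff₀ (by positivity)]; nlinarith,
     by rw [div_le_iff₀ (by positivity)]; nlinarith⟩
  have hlt : (a ^ 2 - 1) / (2 * a ^ 2) < (b ^ 2 - 1) / (2 * b ^ 2) := by
    rw [div_lt_div_iff₀ (by positivity) (by positivity)]
    nlinarith [mul_lt_mul'' hab hab (by linarith) (by linarith)]
  exact mul_lt_mul_of_pos_left (strictAntiOn_arccos (hmem a ha) (hmem b hb) hlt)
    (by positivity)

lemma tendsto_thetaM_atTop : Tendsto thetaM atTop (𝓝 (1 / 3)) := by
  have hx : Tendsto (fun t : ℝ => (t ^ 2 - 1) / (2 * t ^ 2)) atTop (𝓝 (1 / 2)) := by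
    have h : Tendsto (fun t : ℝ => 1 / 2 - 1 / (2 * t ^ 2)) atTop (𝓝 (1 / 2 - 0)) :=
      tendsto_const_nhds.sub <| tendsto_const_nhds.div_atTop <|
        (tendsto_pow_atTop two_ne_zero).const_mul_atTop two_pos
    rw [sub_zero] at h
    refine h.congr' ?_
    filter_upwards [eventually_ne_atTop 0] with t ht
    field_simp
  have harccos : arccos (1 / 2) = π / 3 := by
    rw [← cos_pi_div_three, arccos_cos (by positivity) (by linarith [pi_pos])]
  have h := ((continuous_arccos.tendsto _).comp hx).const_mul (1 / π)
  rwa [harccos, show 1 / π * (π / 3) = 1 / 3 by field_simp [pi_ne_zero]] at h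

lemma thetaM_one_div_sqrt {x : ℝ} (hx : x < 1 / 2) :
    thetaM (1 / √(1 - 2 * x)) = (1 / π) * arccos x := by
  have hsq : √(1 - 2 * x) ^ 2 = 1 - 2 * x := sq_sqrt (by linarith)
  have hu : 1 - 2 * x ≠ 0 := by linarith
  rw [thetaM, div_pow, one_pow, hsq]
  congr 2
  field_simp
  ring

lemma cube_sub_self_one_div_sqrt {x : ℝ} (hx : x < 1 / 2) :
    (1 / √(1 - 2 * x)) ^ 3 - 1 / √(1 - 2 * x) = 2 * x / (1 - 2 * x) ^ ((3 : ℝ) / 2) := by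
  have hu : 0 < 1 - 2 * x := by linarith
  have hsq : √(1 - 2 * x) ^ 2 = 1 - 2 * x := sq_sqrt hu.le
  have hrpow : (1 - 2 * x) ^ ((3 : ℝ) / 2) = (1 - 2 * x) * √(1 - 2 * x) := by
    rw [sqrt_eq_rpow, ← rpow_one_add' hu.le (by norm_num)]
    norm_num
  have hpos : 0 < √(1 - 2 * x) := sqrt_pos.2 hu
  rw [hrpow, div_pow, one_pow, pow_succ, hsq]
  field_simp
  ring

lemma thetaM_eq_half_arccos {t : ℝ} (ht : 1 ≤ t) :
    thetaM t = (1 / (2 * π)) * arccos ((1 - 2 * t ^ 2 - t ^ 4) / (2 * t ^ 4)) := by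
  have ht0 : t ≠ 0 := by positivity
  have hx₀ : 0 ≤ (t ^ 2 - 1) / (2 * t ^ 2) := div_nonneg (by nlinarith) (by positivity)
  have hx₁ : (t ^ 2 - 1) / (2 * t ^ 2) ≤ 1 := by
    rw [div_le_iff₀ (by positivity)]; nlinarith
  have hdouble : (1 - 2 * t ^ 2 - t ^ 4) / (2 * t ^ 4) = 2 * ((t ^ 2 - 1) / (2 * t ^ 2)) ^ 2 - 1 := by
    field_simp
    ring
  rw [hdouble, arccos_two_mul_sq_sub_one hx₀ hx₁, thetaM]
  field_simp

def IsPosCubicRoot (l : ℝ → ℝ) : Prop := ∀ d : ℝ, 0 < d → 0 < l d ∧ l d ^ 3 - l d - d = 0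

namespace IsPosCubicRoot

variable {l : ℝ → ℝ}

lemma cube_sub_self (hl : IsPosCubicRoot l) {d : ℝ} (hd : 0 < d) : l d ^ 3 - l d = d := by
  linarith [(hl d hd).2]

lemma one_lt (hl : IsPosCubicRoot l) {d : ℝ} (hd : 0 < d) : 1 < l d := by
  have hpos := (hl d hd).1
  have hroot := hl.cube_sub_self hd
  nlinarith [sq_nonneg (l d)]

lemma strictMonoOn (hl : IsPosCubicRoot l) : StrictMonoOn l (Ioi 0) := by
  intro a ha b hb hab
  have hmem : ∀ {d : ℝ}, 0 < d → l d ∈ Ici 1 := fun hd => (hl.one_lt hd).le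
  rw [← strictMonoOn_cube_sub_self.lt_iff_lt (hmem ha) (hmem hb),
    hl.cube_sub_self ha, hl.cube_sub_self hb]
  exact hab

lemma apply_cube_sub_self (hl : IsPosCubicRoot l) {t : ℝ} (ht : 1 < t) : l (t ^ 3 - t) = t := by
  have hd := cube_sub_self_pos ht
  exact strictMonoOn_cube_sub_self.injOn (hl.one_lt hd).le ht.le (hl.cube_sub_self hd)

lemma image_Ioi (hl : IsPosCubicRoot l) : l '' Ioi 0 = Ioi 1 := by
  refine Subset.antisymm (image_subset_iff.2 fun d hd => hl.one_lt hd) fun t ht => ?_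
  exact ⟨t ^ 3 - t, cube_sub_self_pos ht, hl.apply_cube_sub_self ht⟩

lemma continuousOn (hl : IsPosCubicRoot l) : ContinuousOn l (Ioi 0) := fun _ hd =>
  (continuousAt_of_monotoneOn_of_image_mem_nhds hl.strictMonoOn.monotoneOn
    (Ioi_mem_nhds hd) (hl.image_Ioi ▸ Ioi_mem_nhds (hl.one_lt hd))).continuousWithinAt

/-- From `d = ℓ (ℓ - 1)(ℓ + 1) ≥ 2 (ℓ - 1)`. -/
lemma le_one_add_half (hl : IsPosCubicRoot l) {d : ℝ} (hd : 0 < d) : l d ≤ 1 + d / 2 := by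
  have h1 := hl.one_lt hd
  have hroot := hl.cube_sub_self hd
  nlinarith [mul_nonneg (sub_pos.2 h1).le (by nlinarith : (0 : ℝ) ≤ l d * (l d + 1) - 2)]

lemma tendsto_nhdsGT_zero (hl : IsPosCubicRoot l) : Tendsto l (𝓝[>] 0) (𝓝 1) := by
  have hupper : Tendsto (fun d : ℝ => 1 + d / 2) (𝓝[>] 0) (𝓝 1) := by
    have h : Tendsto (fun d : ℝ => 1 + d / 2) (𝓝 0) (𝓝 (1 + 0 / 2)) :=
      (continuous_const.add (continuous_id.div_const 2)).tendsto 0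
    simpa using h.mono_left nhdsWithin_le_nhds
  refine tendsto_of_tendsto_of_tendsto_of_le_of_le' tendsto_const_nhds hupper ?_ ?_
  all_goals filter_upwards [self_mem_nhdsWithin] with d hd
  exacts [(hl.one_lt hd).le, hl.le_one_add_half hd]

lemma tendsto_atTop (hl : IsPosCubicRoot l) : Tendsto l atTop atTop := by
  refine tendsto_atTop_atTop.2 fun b => ⟨max b 2 ^ 3 - max b 2, fun d hd => ?_⟩
  have h2 : 2 ≤ max b 2 := le_max_right b 2
  have hpos := cube_sub_self_pos (t := max b 2) (by linarith)
  calc b ≤ max b 2 := le_max_left b 2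
    _ = l (max b 2 ^ 3 - max b 2) := (hl.apply_cube_sub_self (by linarith)).symm
    _ ≤ l d := hl.strictMonoOn.monotoneOn hpos (hpos.trans_le hd) hd

lemma strictAntiOn_thetaM_comp (hl : IsPosCubicRoot l) : StrictAntiOn (thetaM ∘ l) (Ioi 0) :=
  fun _ ha _ hb hab => strictAntiOn_thetaM (hl.one_lt ha).le (hl.one_lt hb).le
    (hl.strictMonoOn ha hb hab)

end IsPosCubicRoot

/-- properties of `θ_m(d) = (1/π)·arccos((ℓ(d)² − 1)/(2ℓ(d)²))`, where
`ℓ(d)` is the unique positive root of `t³ − t − d = 0`: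
(i) the two arccos formulas agree; (ii) `θ_m` is continuous and strictly decreasing on
`(0,∞)` with limits `1/2` at `0⁺` and `1/3` at `+∞`; (iii) `θ_m(d) = 3/7 ↔ d = d₀`,
`θ_m(d) < 3/7 ↔ d > d₀`, `θ_m(d) > 3/7 ↔ d < d₀`; (iv) `ℓ(d₀) = 1/√(1 − 2 sin(π/14))`. -/
theorem stmt_10 (l : ℝ → ℝ)
    (hl : ∀ d : ℝ, 0 < d → 0 < l d ∧ (l d) ^ 3 - l d - d = 0) :
    (∀ d : ℝ, 0 < d →
      (1 / (2 * π)) * Real.arccos ((1 - 2 * (l d) ^ 2 - (l d) ^ 4) / (2 * (l d) ^ 4)) =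
        (1 / π) * Real.arccos (((l d) ^ 2 - 1) / (2 * (l d) ^ 2))) ∧
    ContinuousOn (fun d : ℝ => (1 / π) * Real.arccos (((l d) ^ 2 - 1) / (2 * (l d) ^ 2)))
      (Set.Ioi 0) ∧
    StrictAntiOn (fun d : ℝ => (1 / π) * Real.arccos (((l d) ^ 2 - 1) / (2 * (l d) ^ 2)))
      (Set.Ioi 0) ∧
    Filter.Tendsto (fun d : ℝ => (1 / π) * Real.arccos (((l d) ^ 2 - 1) / (2 * (l d) ^ 2)))
      (nhdsWithin 0 (Set.Ioi 0)) (nhds (1 / 2)) ∧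
    Filter.Tendsto (fun d : ℝ => (1 / π) * Real.arccos (((l d) ^ 2 - 1) / (2 * (l d) ^ 2)))
      Filter.atTop (nhds (1 / 3)) ∧
    (∀ d : ℝ, 0 < d →
      ((1 / π) * Real.arccos (((l d) ^ 2 - 1) / (2 * (l d) ^ 2)) = 3 / 7 ↔ d = d₀) ∧
      ((1 / π) * Real.arccos (((l d) ^ 2 - 1) / (2 * (l d) ^ 2)) < 3 / 7 ↔ d₀ < d) ∧
      ((1 / π) * Real.arccos (((l d) ^ 2 - 1) / (2 * (l d) ^ 2)) > 3 / 7 ↔ d < d₀)) ∧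
    l d₀ = 1 / Real.sqrt (1 - 2 * Real.sin (π / 14)) := by
  have hroot : IsPosCubicRoot l := hl
  have hs := sin_pi_div_fourteen_lt_half
  have hℓ₀ : 1 < 1 / √(1 - 2 * sin (π / 14)) := by
    rw [one_lt_div (sqrt_pos.2 (by linarith)), sqrt_lt' one_pos]
    linarith [sin_pos_of_pos_of_lt_pi (by positivity : 0 < π / 14) (by linarith [pi_pos])]
  have hd₀ : d₀ = (1 / √(1 - 2 * sin (π / 14))) ^ 3 - 1 / √(1 - 2 * sin (π / 14)) := by
    rw [d₀, cube_sub_self_one_div_sqrt hs]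
  have hd₀_pos : 0 < d₀ := hd₀ ▸ cube_sub_self_pos hℓ₀
  have hl_d₀ : l d₀ = 1 / √(1 - 2 * sin (π / 14)) := hd₀ ▸ hroot.apply_cube_sub_self hℓ₀
  have hθ_d₀ : thetaM (l d₀) = 3 / 7 := by
    rw [hl_d₀, thetaM_one_div_sqrt hs, arccos_sin_pi_div_fourteen]
    field_simp
  have hanti := hroot.strictAntiOn_thetaM_comp
  refine ⟨fun d hd => (thetaM_eq_half_arccos (hroot.one_lt hd).le).symm, fun d hd => ?_, hanti,
    ?_, tendsto_thetaM_atTop.comp hroot.tendsto_atTop, fun d hd => ?_, hl_d₀⟩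
  · exact (continuousAt_thetaM (hl d hd).1.ne').comp_continuousWithinAt
      (hroot.continuousOn d hd)
  · have h := (continuousAt_thetaM one_ne_zero).tendsto.comp hroot.tendsto_nhdsGT_zero
    rwa [thetaM_one] at h
  · rw [← hθ_d₀]
    exact ⟨(hanti.eq_iff_eq hd hd₀_pos).trans eq_comm, hanti.lt_iff_gt hd hd₀_pos,
      hanti.lt_iff_gt hd₀_pos hd⟩
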